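/- Let φ₀ ∈ (π/3, π/2), φ ∈ (0, φ₀ − π/3), and σ > 0, κ ≥ 1, c > 0. For λ ∈ Σ_{π−φ₀} with arg λ ≥ 0 and z ∈ Σ_φ, the argument of σ z √(λ + κ + c z) satisfies: there exists ε > 0 (depending only on φ₀, φ) with π − φ₀ ≥ arg(σ z √(λ + κ + c z)) ≥ −(3φ)/2 ≥ −(3φ₀)/2 + π/2 + ε. -/

import Mathlib

/-! With `w = λ + κ + cz`, each of `λ`, `κ`, `cz` lies in the open half-plane
`-θ < arg < π - θ` both for `θ = φ` and for `θ = φ₀`. These half-planes are closed under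
addition, so `-φ < arg w < π - φ₀`. The square root halves the argument and `arg z ∈ (-φ, φ)`,
hence `arg (σ z √w) ∈ (-3φ/2, φ + (π - φ₀)/2)`, and `φ < φ₀ - π/3` puts the upper end below
`π - φ₀`. The margin is `ε = (3(φ₀ - φ) - π)/2`. -/

open Real

namespace Real

theorem sin_pos_iff_of_neg_pi_lt_of_lt_two_pi {x : ℝ} (h₁ : -π < x) (h₂ : x < 2 * π) :
    0 < sin x ↔ 0 < x ∧ x < π := by
  refine ⟨fun h => ⟨?_, ?_⟩, fun h => sin_pos_of_pos_of_lt_pi h.1 h.2⟩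
  · by_contra! hx
    linarith [sin_nonpos_of_nonpos_of_neg_pi_le hx h₁.le]
  · by_contra! hx
    have : 0 ≤ sin (x - π) := sin_nonneg_of_nonneg_of_le_pi (by linarith) (by linarith)
    linarith [sin_sub_pi x]

end Real

namespace Complex

theorem im_mul_exp_ofReal_mul_I (w : ℂ) (θ : ℝ) :
    (w * exp (θ * I)).im = ‖w‖ * Real.sin (arg w + θ) := by
  conv_lhs => rw [← norm_mul_exp_arg_mul_I w]
  rw [mul_assoc, ← exp_add, ← add_mul, ← ofReal_add, im_ofReal_mul, exp_ofReal_mul_I_im]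

theorem im_mul_exp_pos_iff {w : ℂ} {θ : ℝ} (hθ₀ : 0 ≤ θ) (hθ : θ < π) :
    0 < (w * exp (θ * I)).im ↔ w ≠ 0 ∧ -θ < arg w ∧ arg w < π - θ := by
  rcases eq_or_ne w 0 with rfl | hw
  · simp
  rw [im_mul_exp_ofReal_mul_I, mul_pos_iff_of_pos_left (norm_pos_iff.mpr hw),
    sin_pos_iff_of_neg_pi_lt_of_lt_two_pi (by linarith [neg_pi_lt_arg w])
      (by linarith [arg_le_pi w])]
  constructor
  · exact fun ⟨h₁, h₂⟩ => ⟨hw, by linarith, by linarith⟩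
  · exact fun ⟨_, h₁, h₂⟩ => ⟨by linarith, by linarith⟩

theorem arg_add_ofReal_add_ofReal_mul_mem {l z : ℂ} {κ c θ : ℝ} (hκ : 0 < κ) (hc : 0 < c)
    (hθ₀ : 0 < θ) (hθ : θ < π) (hl : l ≠ 0 ∧ -θ < arg l ∧ arg l < π - θ)
    (hz : z ≠ 0 ∧ -θ < arg z ∧ arg z < π - θ) :
    l + κ + c * z ≠ 0 ∧ -θ < arg (l + κ + c * z) ∧ arg (l + κ + c * z) < π - θ := by
  rw [← im_mul_exp_pos_iff hθ₀.le hθ] at hl hz ⊢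
  have hsum : ((l + κ + c * z) * exp (θ * I)).im
      = (l * exp (θ * I)).im + κ * Real.sin θ + c * (z * exp (θ * I)).im := by
    simp only [add_mul, add_im, mul_assoc, im_ofReal_mul, exp_ofReal_mul_I_im]
  rw [hsum]
  have hsin := sin_pos_of_pos_of_lt_pi hθ₀ hθ
  positivity

theorem arg_cpow_one_div_two (w : ℂ) : arg (w ^ (1 / 2 : ℂ)) = arg w / 2 := by
  rcases eq_or_ne w 0 with rfl | hw
  · simp
  have him : (log w * (1 / 2)).im = arg w / 2 := by simp [log_im, div_eq_mul_inv]
  rw [cpow_def_of_ne_zero hw, arg_exp, him, toIocMod_eq_self]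
  constructor <;> linarith [neg_pi_lt_arg w, arg_le_pi w, pi_pos]

theorem arg_ofReal_mul_mul_cpow_one_div_two {σ : ℝ} {z w : ℂ} (hσ : 0 < σ) (hz : z ≠ 0)
    (hw : w ≠ 0) (hz' : |arg z| < π / 2) :
    arg (σ * z * w ^ (1 / 2 : ℂ)) = arg z + arg w / 2 := by
  have hsqrt : w ^ (1 / 2 : ℂ) ≠ 0 := by simp [cpow_eq_zero_iff, hw]
  have hsum : arg z + arg (w ^ (1 / 2 : ℂ)) ∈ Set.Ioc (-π) π := by
    rw [arg_cpow_one_div_two]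
    constructor <;> linarith [abs_lt.mp hz', neg_pi_lt_arg w, arg_le_pi w]
  rw [mul_assoc, arg_real_mul _ hσ, arg_mul hz hsqrt hsum, arg_cpow_one_div_two]

end Complex

theorem stmt13 (φ₀ φ : ℝ) (hφ₀ : φ₀ ∈ Set.Ioo (π / 3) (π / 2))
    (hφ : φ ∈ Set.Ioo 0 (φ₀ - π / 3)) :
    ∃ ε > (0 : ℝ), ∀ (σ κ c : ℝ) (l z : ℂ), 0 < σ → 1 ≤ κ → 0 < c →
      l ≠ 0 → |l.arg| < π - φ₀ → 0 ≤ l.arg → z ≠ 0 → |z.arg| < φ →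
      ((σ : ℂ) * z * (l + (κ : ℂ) + (c : ℂ) * z) ^ ((1 : ℂ) / 2)).arg ≤ π - φ₀ ∧
      -(3 * φ) / 2 ≤ ((σ : ℂ) * z * (l + (κ : ℂ) + (c : ℂ) * z) ^ ((1 : ℂ) / 2)).arg ∧
      -(3 * φ₀) / 2 + π / 2 + ε ≤ -(3 * φ) / 2 := by
  obtain ⟨hφ₀₁, hφ₀₂⟩ := hφ₀
  obtain ⟨hφ₁, hφ₂⟩ := hφ
  refine ⟨(3 * (φ₀ - φ) - π) / 2, by linarith, ?_⟩
  intro σ κ c l z hσ hκ hc hl hlarg hlarg₀ hz hzarg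
  rw [abs_lt] at hlarg hzarg
  have hκ₀ : 0 < κ := by linarith
  have hw_mem (θ : ℝ) (hφθ : φ ≤ θ) (hθφ₀ : θ ≤ φ₀) :=
    Complex.arg_add_ofReal_add_ofReal_mul_mem (θ := θ) hκ₀ hc (by linarith) (by linarith)
      ⟨hl, by linarith, by linarith⟩ ⟨hz, by linarith, by linarith⟩
  obtain ⟨hw, hw_lower, -⟩ := hw_mem φ le_rfl (by linarith)
  obtain ⟨-, -, hw_upper⟩ := hw_mem φ₀ (by linarith) le_rfl
  have hz_half : |z.arg| < π / 2 := abs_lt.mpr ⟨by linarith, by linarith⟩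
  rw [Complex.arg_ofReal_mul_mul_cpow_one_div_two hσ hz hw hz_half]
  exact ⟨by linarith, by linarith, by linarith⟩
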